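/- Let k ≥ 7, let V be a finite set partitioned into disjoint nonempty sets A₁, …, A_k, and let E = { (⋃_{i∈α} A_i) ∪ (⋃_{j∈β} A_j) : α, β intervals of {1, …, k} }. Then a linear ordering π of V is an ABABA-free ordering of the hypergraph (V, E) if and only if π has structure A₁, A₂, …, A_k or structure A_k, A_{k−1}, …, A₁. -/

import Mathlib

/-- `π` is a linear ordering of the vertex set `Vs`: a duplicate-free list
consisting of exactly the elements of `Vs`. -/
def IsOrderingOf {α : Type*} (Vs : Set α) (π : List α) : Prop :=
  π.Nodup ∧ ∀ v, v ∈ π ↔ v ∈ Vs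

/-- The sets `A`, `B` form an alternating pattern of length `n` with respect to
the ordering `π`: there are `n` vertices occurring in this order in `π`, those
at even positions belonging to `A \ B` and those at odd positions to `B \ A`.
For `n = 2k` this is an `(AB)^k` pattern; for `n = 2k+1` it is an `(AB)^k A`
pattern (so `n = 4` gives `ABAB` and `n = 5` gives `ABABA`). -/
def FormPattern {α : Type*} (n : ℕ) (A B : Set α) (π : List α) : Prop :=
  ∃ w : List α, w.Sublist π ∧ w.length = n ∧
    ∀ (i : ℕ) (h : i < w.length),
      (i % 2 = 0 → w[i]'h ∈ A \ B) ∧ (i % 2 = 1 → w[i]'h ∈ B \ A)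

/-- `π` is a pattern-free ordering for the edge set `E`: no pair of edges forms
an alternating pattern of length `n` with respect to `π`. -/
def FreeOrdering {α : Type*} (n : ℕ) (E : Set (Set α)) (π : List α) : Prop :=
  ∀ A ∈ E, ∀ B ∈ E, ¬ FormPattern n A B π

/-- Two orderings are equivalent if one is obtained from the other by cyclic
shifts, or by reversing the order and then applying cyclic shifts. -/
def EquivOrderings {α : Type*} (π₁ π₂ : List α) : Prop :=
  (∃ m, π₂ = π₁.rotate m) ∨ (∃ m, π₂ = π₁.reverse.rotate m)

/-- `S` is an interval of `{1, …, N}`: a set of consecutive integers. -/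
def IsNatInterval (N : ℕ) (S : Set ℕ) : Prop :=
  S ⊆ Set.Icc 1 N ∧ ∃ a b, S = Set.Icc a b

/-- `v` comes (strictly) before `w` in the ordering `π`. -/
def Precedes {α : Type*} (π : List α) (v w : α) : Prop :=
  [v, w].Sublist π

/-- The ordering `π` has structure `A 1, A 2, …, A k`: for `i ≠ j` in
`{1, …, k}`, an element of `A i` comes before an element of `A j`
if and only if `i < j`. -/
def HasStructure {α : Type*} (k : ℕ) (A : ℕ → Set α) (π : List α) : Prop :=
  ∀ i ∈ Set.Icc 1 k, ∀ j ∈ Set.Icc 1 k, i ≠ j →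
    ∀ v ∈ A i, ∀ w ∈ A j, (Precedes π v w ↔ i < j)

/-!
Sending each vertex to the index of its block turns an ordering into a word over `{1, …, k}`
that uses every letter, and turns the edges into the unions of two intervals of letters. So it
suffices to show that a word with at least seven distinct letters over a linear order avoids
`ABABA` for disjoint unions of two intervals if and only if it is weakly monotone.

A monotone word avoids the pattern: two of the three `A`-letters lie in the same interval of
`A`, and then so does the `B`-letter between them. Conversely, if the word is not monotone,
then for some cut of the alphabet into a lower interval `C` and an upper interval `Cᶜ` it
contains low–high–low or high–low–high; swapping the roles of `C` and `Cᶜ`, say low–high–low.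
If the word begins and ends with high letters, `Cᶜ` and `C` form the pattern. Otherwise edges
such as `C ∪ {b}` against `{a, c}`, or `C \ {b}` against `{b, h}`, show that at most two
distinct high letters sit between two low ones and that few low letters can occur on either
side of a high one; counting then leaves fewer than seven letters.
-/

open Finset
open scoped List

namespace List

variable {α : Type*}

theorem pair_sublist_or_pair_sublist {a b : α} {l : List α} (ha : a ∈ l) (hb : b ∈ l)
    (hab : a ≠ b) : [a, b] <+ l ∨ [b, a] <+ l := by
  induction l with
  | nil => simp at ha
  | cons x l ih =>
    rcases mem_cons.1 ha with rfl | ha'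
    · exact .inl ((singleton_sublist.2 ((mem_cons.1 hb).resolve_left hab.symm)).cons_cons a)
    · rcases mem_cons.1 hb with rfl | hb'
      · exact .inr ((singleton_sublist.2 ha').cons_cons b)
      · exact (ih ha' hb').imp (·.cons x) (·.cons x)

theorem exists_pair_sublist_of_one_lt_card {F : Finset α} {l : List α} (hF : 1 < #F)
    (hFl : ∀ a ∈ F, a ∈ l) : ∃ x y, [x, y] <+ l ∧ x ∈ F ∧ y ∈ F ∧ x ≠ y := by
  obtain ⟨a, ha, b, hb, hab⟩ := one_lt_card.1 hF
  rcases pair_sublist_or_pair_sublist (hFl a ha) (hFl b hb) hab with h | h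
  · exact ⟨a, b, h, ha, hb, hab⟩
  · exact ⟨b, a, h, hb, ha, hab.symm⟩

theorem exists_triple_sublist_of_two_lt_card {F : Finset α} {l : List α} (hF : 2 < #F)
    (hFl : ∀ a ∈ F, a ∈ l) :
    ∃ x y z, [x, y, z] <+ l ∧ x ∈ F ∧ y ∈ F ∧ z ∈ F ∧ y ≠ x ∧ y ≠ z := by
  classical
  induction l generalizing F with
  | nil =>
    have : F = ∅ := eq_empty_of_forall_notMem fun a ha => by simpa using hFl a ha
    simp [this] at hF
  | cons e l ih =>
    by_cases he : e ∈ F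
    · have hF' : 1 < #(F.erase e) := by rw [card_erase_of_mem he]; omega
      have hl : ∀ a ∈ F.erase e, a ∈ l := fun a ha =>
        (mem_cons.1 (hFl a (Finset.mem_of_mem_erase ha))).resolve_left (Finset.ne_of_mem_erase ha)
      obtain ⟨y, z, hyz, hy, hz, hne⟩ := exists_pair_sublist_of_one_lt_card hF' hl
      exact ⟨e, y, z, hyz.cons_cons e, he, Finset.mem_of_mem_erase hy, Finset.mem_of_mem_erase hz,
        Finset.ne_of_mem_erase hy, hne⟩
    · have hl : ∀ a ∈ F, a ∈ l := fun a ha =>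
        (mem_cons.1 (hFl a ha)).resolve_left (by rintro rfl; exact he ha)
      obtain ⟨x, y, z, h, hx⟩ := ih hF hl
      exact ⟨x, y, z, h.cons e, hx⟩

theorem exists_alternating_triple {p : α → Prop} {l : List α} {a b c d : α}
    (hab : [a, b] <+ l) (hcd : [c, d] <+ l) (ha : p a) (hb : ¬ p b) (hc : ¬ p c) (hd : p d) :
    ∃ x y z, [x, y, z] <+ l ∧ (p x ∧ ¬ p y ∧ p z ∨ ¬ p x ∧ p y ∧ ¬ p z) := by
  induction l with
  | nil => simp at hab
  | cons e l ih =>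
    rcases sublist_cons_iff.1 hab with hab' | ⟨r, hr, -⟩
    · rcases sublist_cons_iff.1 hcd with hcd' | ⟨r', hr', -⟩
      · obtain ⟨x, y, z, h, hxyz⟩ := ih hab' hcd'
        exact ⟨x, y, z, h.cons e, hxyz⟩
      · obtain ⟨rfl, rfl⟩ := cons.inj hr'
        exact ⟨c, a, b, hab'.cons_cons c, .inr ⟨hc, ha, hb⟩⟩
    · obtain ⟨rfl, rfl⟩ := cons.inj hr
      rcases sublist_cons_iff.1 hcd with hcd' | ⟨r', hr', -⟩
      · exact ⟨a, c, d, hcd'.cons_cons a, .inl ⟨ha, hc, hd⟩⟩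
      · exact absurd ((cons.inj hr').1 ▸ ha) hc

theorem exists_eq_append_cons_of_triple_sublist {x y z : α} {l : List α} (h : [x, y, z] <+ l) :
    ∃ P R, l = P ++ y :: R ∧ x ∈ P ∧ z ∈ R := by
  obtain ⟨r₁, r₂, rfl, hx, h⟩ := cons_sublist_iff.1 h
  obtain ⟨r₃, r₄, rfl, hy, hz⟩ := cons_sublist_iff.1 h
  obtain ⟨u, v, rfl⟩ := append_of_mem hy
  exact ⟨r₁ ++ u, v ++ r₄, by simp, by simp [hx], by simp [singleton_sublist.1 hz]⟩

theorem exists_last_eq_append_cons {p : α → Prop} {l : List α} (h : ∃ x ∈ l, p x) :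
    ∃ P y R, l = P ++ y :: R ∧ p y ∧ ∀ z ∈ R, ¬ p z := by
  induction l with
  | nil => simp at h
  | cons e l ih =>
    by_cases hl : ∃ x ∈ l, p x
    · obtain ⟨P, y, R, rfl, hy, hR⟩ := ih hl
      exact ⟨e :: P, y, R, rfl, hy, hR⟩
    · obtain ⟨x, hx, hpx⟩ := h
      rcases mem_cons.1 hx with rfl | hx
      · exact ⟨[], x, l, rfl, hpx, fun z hz hpz => hl ⟨z, hz, hpz⟩⟩
      · exact absurd ⟨x, hx, hpx⟩ hl

end List

section Pattern

variable {β γ : Type*} {n : ℕ} {A B : Set γ} {l : List β}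

theorem formPattern_map_iff (f : β → γ) :
    FormPattern n A B (l.map f) ↔ FormPattern n (f ⁻¹' A) (f ⁻¹' B) l := by
  constructor
  · rintro ⟨w, hw, hlen, hmem⟩
    obtain ⟨w, hw', rfl⟩ := List.sublist_map_iff.1 hw
    refine ⟨w, hw', by simpa using hlen, fun i hi => ?_⟩
    have := hmem i (by simpa using hi)
    simp only [List.getElem_map] at this
    simpa using this
  · rintro ⟨w, hw, hlen, hmem⟩
    exact ⟨w.map f, hw.map f, by simpa using hlen, fun i hi => by
      simpa using hmem i (by simpa using hi)⟩

theorem formPattern_five_iff {A B : Set β} :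
    FormPattern 5 A B l ↔ ∃ x₁ y₁ x₂ y₂ x₃, [x₁, y₁, x₂, y₂, x₃] <+ l ∧
      x₁ ∈ A \ B ∧ y₁ ∈ B \ A ∧ x₂ ∈ A \ B ∧ y₂ ∈ B \ A ∧ x₃ ∈ A \ B := by
  constructor
  · rintro ⟨w, hw, hlen, hmem⟩
    match w, hlen with
    | [x₁, y₁, x₂, y₂, x₃], _ =>
      exact ⟨x₁, y₁, x₂, y₂, x₃, hw, (hmem 0 (by simp)).1 rfl, (hmem 1 (by simp)).2 rfl,
        (hmem 2 (by simp)).1 rfl, (hmem 3 (by simp)).2 rfl, (hmem 4 (by simp)).1 rfl⟩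
  · rintro ⟨x₁, y₁, x₂, y₂, x₃, hw, h₁, h₂, h₃, h₄, h₅⟩
    refine ⟨_, hw, rfl, fun i hi => ?_⟩
    simp only [List.length_cons, List.length_nil] at hi
    interval_cases i <;> simp_all

theorem FreeOrdering.sublist {E : Set (Set β)} {l' : List β} (h : FreeOrdering n E l)
    (hl : l' <+ l) : FreeOrdering n E l' :=
  fun A hA B hB ⟨w, hw, hpat⟩ => h A hA B hB ⟨w, hw.trans hl, hpat⟩

theorem FreeOrdering.reverse {E : Set (Set β)} (h : FreeOrdering 5 E l) :
    FreeOrdering 5 E l.reverse := by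
  intro A hA B hB hpat
  obtain ⟨x₁, y₁, x₂, y₂, x₃, hw, h₁, h₂, h₃, h₄, h₅⟩ := formPattern_five_iff.1 hpat
  refine h A hA B hB (formPattern_five_iff.2 ⟨x₃, y₂, x₂, y₁, x₁, ?_, h₅, h₄, h₃, h₂, h₁⟩)
  simpa using List.reverse_sublist.2 hw

end Pattern

section BiInterval

variable {α : Type*} [LinearOrder α]

def IsBiInterval (S : Set α) : Prop :=
  ∃ I J : Set α, I.OrdConnected ∧ J.OrdConnected ∧ S = I ∪ J

abbrev BiIntervalFree (s : List α) : Prop :=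
  FreeOrdering 5 {S : Set α | IsBiInterval S} s

theorem Set.OrdConnected.isBiInterval {C : Set α} (hC : C.OrdConnected) : IsBiInterval C :=
  ⟨C, C, hC, hC, (Set.union_self C).symm⟩

theorem isBiInterval_union {I J : Set α} (hI : I.OrdConnected) (hJ : J.OrdConnected) :
    IsBiInterval (I ∪ J) :=
  ⟨I, J, hI, hJ, rfl⟩

theorem IsBiInterval.mem_or_mem_of_le {S : Set α} (hS : IsBiInterval S) {x₁ y₁ x₂ y₂ x₃ : α}
    (h₁ : x₁ ∈ S) (h₂ : x₂ ∈ S) (h₃ : x₃ ∈ S)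
    (hxy₁ : x₁ ≤ y₁) (hyx₁ : y₁ ≤ x₂) (hxy₂ : x₂ ≤ y₂) (hyx₂ : y₂ ≤ x₃) : y₁ ∈ S ∨ y₂ ∈ S := by
  obtain ⟨I, J, hI, hJ, rfl⟩ := hS
  have between (K : Set α) (hK : K.OrdConnected) {a y c : α} (ha : a ∈ K) (hc : c ∈ K)
      (hay : a ≤ y) (hyc : y ≤ c) : y ∈ K := hK.out ha hc ⟨hay, hyc⟩
  rcases h₁ with h₁ | h₁ <;> rcases h₂ with h₂ | h₂ <;> rcases h₃ with h₃ | h₃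
  all_goals first
    | exact .inl (.inl (between I hI h₁ h₂ hxy₁ hyx₁))
    | exact .inl (.inr (between J hJ h₁ h₂ hxy₁ hyx₁))
    | exact .inr (.inl (between I hI h₂ h₃ hxy₂ hyx₂))
    | exact .inr (.inr (between J hJ h₂ h₃ hxy₂ hyx₂))
    | exact .inl (.inl (between I hI h₁ h₃ hxy₁ (hyx₁.trans (hxy₂.trans hyx₂))))
    | exact .inl (.inr (between J hJ h₁ h₃ hxy₁ (hyx₁.trans (hxy₂.trans hyx₂))))

theorem biIntervalFree_of_pairwise_le {s : List α} (hs : s.Pairwise (· ≤ ·)) :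
    BiIntervalFree s := by
  rintro S hS T - hpat
  obtain ⟨x₁, y₁, x₂, y₂, x₃, hw, h₁, h₂, h₃, h₄, h₅⟩ := formPattern_five_iff.1 hpat
  have hle := hs.sublist hw
  simp only [List.pairwise_cons, List.mem_cons, List.not_mem_nil, or_false,
    forall_eq_or_imp, forall_eq, List.Pairwise.nil] at hle
  rcases hS.mem_or_mem_of_le h₁.1 h₃.1 h₅.1 hle.1.1 hle.2.1.1 hle.2.2.1.1 hle.2.2.2.1 with h | h
  exacts [h₂.2 h, h₄.2 h]

theorem BiIntervalFree.false_of_sublist {s : List α} (hs : BiIntervalFree s) {S T : Set α}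
    (hS : IsBiInterval S) (hT : IsBiInterval T) (hST : Disjoint S T) {x₁ y₁ x₂ y₂ x₃ : α}
    (hw : [x₁, y₁, x₂, y₂, x₃] <+ s) (h₁ : x₁ ∈ S) (h₂ : y₁ ∈ T) (h₃ : x₂ ∈ S) (h₄ : y₂ ∈ T)
    (h₅ : x₃ ∈ S) : False := by
  have hS' {x} (hx : x ∈ S) : x ∈ S \ T := ⟨hx, hST.notMem_of_mem_left hx⟩
  have hT' {y} (hy : y ∈ T) : y ∈ T \ S := ⟨hy, hST.notMem_of_mem_right hy⟩
  exact hs S hS T hT (formPattern_five_iff.2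
    ⟨x₁, y₁, x₂, y₂, x₃, hw, hS' h₁, hT' h₂, hS' h₃, hT' h₄, hS' h₅⟩)

end BiInterval

theorem Finset.card_le_two_or_card_union_le_three {α : Type*} [DecidableEq α] {X Y : Finset α}
    (hY : Y.Nonempty) (hXY : ∀ y ∈ Y, #(X.erase y) ≤ 2) : #X ≤ 2 ∨ #(X ∪ Y) ≤ 3 := by
  by_cases hX : #X ≤ 2
  · exact .inl hX
  have hYX : Y ⊆ X := fun y hy => by
    by_contra hyX
    have := hXY y hy
    rw [erase_eq_of_notMem hyX] at this
    omega
  obtain ⟨y, hy⟩ := hY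
  have := hXY y hy
  have := pred_card_le_card_erase (s := X) (a := y)
  rw [union_eq_left.2 hYX]
  omega

theorem Finset.card_union_le_four_of_forall_card_erase_le_two {α : Type*} [DecidableEq α]
    {X Y : Finset α} (hX : X.Nonempty) (hY : Y.Nonempty) (hXY : ∀ y ∈ Y, #(X.erase y) ≤ 2)
    (hYX : ∀ x ∈ X, #(Y.erase x) ≤ 2) : #(X ∪ Y) ≤ 4 := by
  have := card_union_le X Y
  have hX3 := card_le_two_or_card_union_le_three hY hXY
  have hY3 := card_le_two_or_card_union_le_three hX hYX
  rw [union_comm] at hY3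
  omega

section Cut

variable {α : Type*} [LinearOrder α] {C : Set α}

open scoped Classical

theorem BiIntervalFree.card_le_two_of_between {P M R : List α}
    (hs : BiIntervalFree (P ++ M ++ R)) (hC : C.OrdConnected) {x y : α} (hx : x ∈ P)
    (hxC : x ∈ C) (hy : y ∈ R) (hyC : y ∈ C) {F : Finset α} (hF : ∀ a ∈ F, a ∈ M ∧ a ∉ C) :
    #F ≤ 2 := by
  by_contra! hF3
  obtain ⟨a, b, c, habc, ha, hb, hc, hba, hbc⟩ :=
    List.exists_triple_sublist_of_two_lt_card hF3 fun a ha => (hF a ha).1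
  refine hs.false_of_sublist (S := C ∪ {b}) (T := {a} ∪ {c})
    (isBiInterval_union hC Set.ordConnected_singleton)
    (isBiInterval_union Set.ordConnected_singleton Set.ordConnected_singleton) ?_
    (((List.singleton_sublist.2 hx).append habc).append (List.singleton_sublist.2 hy))
    (.inl hxC) (.inl rfl) (.inr rfl) (.inr rfl) (.inl hyC)
  rw [Set.disjoint_left]
  rintro z (hz | rfl) (rfl | rfl)
  exacts [(hF z ha).2 hz, (hF z hc).2 hz, hba rfl, hbc rfl]

theorem BiIntervalFree.card_erase_le_two {P R : List α} {h y : α}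
    (hs : BiIntervalFree (P ++ h :: R)) (hC : C.OrdConnected) (hh : h ∉ C) (hy : y ∈ R)
    (hyC : y ∈ C) : #({a ∈ P.toFinset | a ∈ C}.erase y) ≤ 2 := by
  by_contra! h3
  obtain ⟨a, b, c, habc, ha, hb, hc, hba, hbc⟩ :=
    List.exists_triple_sublist_of_two_lt_card h3 fun a ha => by
      simp only [mem_erase, mem_filter, List.mem_toFinset] at ha
      exact ha.2.1
  simp only [mem_erase, mem_filter, List.mem_toFinset] at ha hb hc
  have off_b {z} (hz : z ∈ C) (hzb : z ≠ b) : z ∈ C ∩ Set.Iio b ∪ C ∩ Set.Ioi b :=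
    hzb.lt_or_gt.imp (⟨hz, ·⟩) (⟨hz, ·⟩)
  refine hs.false_of_sublist (S := C ∩ Set.Iio b ∪ C ∩ Set.Ioi b) (T := {b} ∪ {h})
    (isBiInterval_union (hC.inter Set.ordConnected_Iio) (hC.inter Set.ordConnected_Ioi))
    (isBiInterval_union Set.ordConnected_singleton Set.ordConnected_singleton) ?_
    (habc.append ((List.singleton_sublist.2 hy).cons_cons h))
    (off_b ha.2.2 hba.symm) (.inl rfl) (off_b hc.2.2 hbc.symm) (.inr rfl)
    (off_b hyC hb.1.symm)
  rw [Set.disjoint_left]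
  rintro z (⟨hzC, hzb⟩ | ⟨hzC, hzb⟩) (rfl | rfl)
  all_goals simp_all

theorem BiIntervalFree.eq_last_of_sublist {s : List α} (hs : BiIntervalFree s)
    (hC : C.OrdConnected) {x e y g g' : α} (hw : [x, e, y, g, g'] <+ s) (hx : x ∈ C)
    (he : e ∉ C) (hy : y ∈ C) (hg : g ∉ C) (hgg' : g ≠ g') : e = g' := by
  by_contra hne
  refine hs.false_of_sublist (S := C ∪ {g'}) (T := {e} ∪ {g})
    (isBiInterval_union hC Set.ordConnected_singleton)
    (isBiInterval_union Set.ordConnected_singleton Set.ordConnected_singleton) ?_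
    hw (.inl hx) (.inl rfl) (.inl hy) (.inr rfl) (.inr rfl)
  rw [Set.disjoint_left]
  rintro z (hz | rfl) (rfl | rfl)
  exacts [he hz, hg hz, hne rfl, hgg' rfl]

theorem BiIntervalFree.card_filter_mem_le_four {P R : List α} {h : α}
    (hs : BiIntervalFree (P ++ h :: R)) (hC : C.OrdConnected) (hh : h ∉ C)
    (hP : ∃ x ∈ P, x ∈ C) (hR : ∃ z ∈ R, z ∈ C) :
    #{a ∈ (P ++ h :: R).toFinset | a ∈ C} ≤ 4 := by
  set X := {a ∈ P.toFinset | a ∈ C}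
  set Y := {a ∈ R.toFinset | a ∈ C}
  have hXY : ∀ y ∈ Y, #(X.erase y) ≤ 2 := fun y hy => by
    simp only [Y, mem_filter, List.mem_toFinset] at hy
    exact hs.card_erase_le_two hC hh hy.1 hy.2
  have hYX : ∀ x ∈ X, #(Y.erase x) ≤ 2 := fun x hx => by
    simp only [X, mem_filter, List.mem_toFinset] at hx
    have hs' : BiIntervalFree (R.reverse ++ h :: P.reverse) := by
      simpa using hs.reverse
    simpa using hs'.card_erase_le_two hC hh (List.mem_reverse.2 hx.1) hx.2
  have hsplit : {a ∈ (P ++ h :: R).toFinset | a ∈ C} = X ∪ Y := by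
    rw [List.toFinset_append, List.toFinset_cons, filter_union, filter_insert, if_neg hh]
  obtain ⟨x, hx, hxC⟩ := hP
  obtain ⟨z, hz, hzC⟩ := hR
  rw [hsplit]
  exact card_union_le_four_of_forall_card_erase_le_two ⟨x, by simp [X, hx, hxC]⟩
    ⟨z, by simp [Y, hz, hzC]⟩ hXY hYX

theorem BiIntervalFree.false_of_ends_mem {f h g : α} {P R : List α}
    (hs : BiIntervalFree (f :: P ++ h :: R ++ [g])) (hC : C.OrdConnected)
    (h7 : 7 ≤ #(f :: P ++ h :: R ++ [g]).toFinset) (hf : f ∈ C) (hh : h ∉ C) (hg : g ∈ C) :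
    False := by
  have hout : #{a ∈ (f :: P ++ h :: R ++ [g]).toFinset | a ∉ C} ≤ 2 := by
    have hs' : BiIntervalFree ([f] ++ (P ++ h :: R) ++ [g]) := by simpa using hs
    refine hs'.card_le_two_of_between hC (List.mem_singleton_self f) hf
      (List.mem_singleton_self g) hg fun a ha => ?_
    simp at ha ⊢
    grind
  have hin : #{a ∈ (f :: P ++ h :: R ++ [g]).toFinset | a ∈ C} ≤ 4 := by
    have hs' : BiIntervalFree ((f :: P) ++ h :: (R ++ [g])) := by simpa using hs
    simpa using hs'.card_filter_mem_le_four hC hh ⟨f, by simp, hf⟩ ⟨g, by simp, hg⟩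
  have := card_filter_add_card_filter_not (s := (f :: P ++ h :: R ++ [g]).toFinset) (· ∈ C)
  omega

theorem BiIntervalFree.false_of_tail_two_letters {f h ℓ g₁ g₂ : α} {P R T : List α}
    (hs : BiIntervalFree (f :: P ++ h :: R ++ ℓ :: T)) (hC : C.OrdConnected)
    (h7 : 7 ≤ #(f :: P ++ h :: R ++ ℓ :: T).toFinset) (hf : f ∈ C) (hh : h ∉ C) (hℓ : ℓ ∈ C)
    (hT : ∀ t ∈ T, t ∉ C) (hg : [g₁, g₂] <+ T) (hg₁₂ : g₁ ≠ g₂) : False := by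
  have hlater : ∀ {e g g'}, e ∈ f :: P ++ h :: R → e ∉ C → [g, g'] <+ T → g ≠ g' → e = g' := by
    intro e g g' he heC hgg hne
    have he' : e ∈ P ++ h :: R := by
      simp only [List.cons_append, List.mem_cons] at he
      exact he.resolve_left (by rintro rfl; exact heC hf)
    exact hs.eq_last_of_sublist hC
      (((List.singleton_sublist.2 he').append (hgg.cons_cons ℓ)).cons_cons f)
      hf heC hℓ (hT g (hgg.subset (by simp))) hne
  have hTcard : #T.toFinset ≤ 2 := by
    by_contra! h3
    obtain ⟨a, b, c, habc, -, -, -, hba, hbc⟩ :=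
      List.exists_triple_sublist_of_two_lt_card h3 fun a ha => List.mem_toFinset.1 ha
    have hhT : h ∈ f :: P ++ h :: R := by simp
    have hb := hlater hhT hh ((List.sublist_append_left [a, b] [c]).trans habc) hba.symm
    have hc := hlater hhT hh (((List.Sublist.refl [b, c]).cons a).trans habc) hbc
    exact hbc (hb.symm.trans hc)
  have hout : #{a ∈ (f :: P ++ h :: R ++ ℓ :: T).toFinset | a ∉ C} ≤ 2 := by
    refine (card_le_card fun a ha => ?_).trans hTcard
    simp only [mem_filter, List.mem_toFinset, List.mem_append, List.mem_cons] at ha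
    obtain ⟨ha | rfl | hT' , haC⟩ := ha
    · rw [hlater (by simp at ha ⊢; tauto) haC hg hg₁₂]
      exact List.mem_toFinset.2 (hg.subset (by simp))
    · exact absurd hℓ haC
    · exact List.mem_toFinset.2 hT'
  have hin : #{a ∈ (f :: P ++ h :: R ++ ℓ :: T).toFinset | a ∈ C} ≤ 4 := by
    have hW : BiIntervalFree ((f :: P) ++ h :: (R ++ [ℓ])) :=
      hs.sublist (by simp)
    refine (card_le_card fun a ha => ?_).trans
      (hW.card_filter_mem_le_four hC hh ⟨f, by simp, hf⟩ ⟨ℓ, by simp, hℓ⟩)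
    simp only [mem_filter, List.mem_toFinset] at ha ⊢
    refine ⟨?_, ha.2⟩
    simp only [List.cons_append, List.mem_cons, List.mem_append] at ha ⊢
    grind
  have := card_filter_add_card_filter_not (s := (f :: P ++ h :: R ++ ℓ :: T).toFinset) (· ∈ C)
  omega

theorem BiIntervalFree.eq_first_of_pair_sublist {P R T : List α} {a b h m g : α}
    (hs : BiIntervalFree (P ++ h :: R ++ T)) (hCc : Cᶜ.OrdConnected) (hab : [a, b] <+ P)
    (hne : a ≠ b) (hb : b ∈ C) (hh : h ∉ C) (hm : m ∈ R) (hmC : m ∈ C) (hg : g ∈ T)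
    (hgC : g ∉ C) : m = a := by
  have hw : [a, b, h, m, g] <+ P ++ h :: R ++ T := by
    simpa using hab.append
      (((List.singleton_sublist.2 hm).append (List.singleton_sublist.2 hg)).cons_cons h)
  have hs' : BiIntervalFree _ := hs.reverse
  exact hs'.eq_last_of_sublist hCc (by simpa using List.reverse_sublist.2 hw) hgC
    (not_not.2 hmC) hh (not_not.2 hb) hne.symm

theorem BiIntervalFree.card_filter_mem_le_three {P R T : List α} {h ℓ g : α}
    (hs : BiIntervalFree (P ++ h :: R ++ T)) (hCc : Cᶜ.OrdConnected) (hh : h ∉ C)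
    (hℓ : ℓ ∈ R) (hℓC : ℓ ∈ C) (hg : g ∈ T) (hgC : g ∉ C) :
    #{a ∈ (P ++ R).toFinset | a ∈ C} ≤ 3 := by
  set X := {a ∈ P.toFinset | a ∈ C}
  set Y := {a ∈ R.toFinset | a ∈ C}
  have hmemX {a} (ha : a ∈ X) : a ∈ P ∧ a ∈ C := by simpa [X] using ha
  have hY : #Y ≤ 2 := by
    have hs' : BiIntervalFree ((P ++ [h]) ++ R ++ T) := by simpa using hs
    exact hs'.card_le_two_of_between hCc (by simp) hh hg hgC fun a ha => by
      simp only [Y, mem_filter, List.mem_toFinset] at ha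
      exact ⟨ha.1, not_not.2 ha.2⟩
  have hYa {a b} (hab : [a, b] <+ P) (hne : a ≠ b) (hb : b ∈ C) : ∀ m ∈ Y, m = a :=
    fun m hm => by
      simp only [Y, mem_filter, List.mem_toFinset] at hm
      exact hs.eq_first_of_pair_sublist hCc hab hne hb hh hm.1 hm.2 hg hgC
  have hℓY : ℓ ∈ Y := by simp [Y, hℓ, hℓC]
  have hX : #X ≤ 2 := by
    by_contra! h3
    obtain ⟨a, b, c, habc, -, hb, hc, hba, hbc⟩ :=
      List.exists_triple_sublist_of_two_lt_card h3 fun a ha => (hmemX ha).1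
    have h₁ := hYa ((List.sublist_append_left [a, b] [c]).trans habc) hba.symm (hmemX hb).2 ℓ hℓY
    have h₂ := hYa (((List.Sublist.refl [b, c]).cons a).trans habc) hbc (hmemX hc).2 ℓ hℓY
    exact hba (h₂.symm.trans h₁)
  have hXY : 2 ≤ #X → #Y ≤ 1 := fun h2 => by
    obtain ⟨a, b, hab, -, hb, hne⟩ :=
      List.exists_pair_sublist_of_one_lt_card h2 fun a ha => (hmemX ha).1
    exact card_le_one.2 fun m hm m' hm' =>
      (hYa hab hne (hmemX hb).2 m hm).trans (hYa hab hne (hmemX hb).2 m' hm').symm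
  rw [List.toFinset_append, filter_union]
  change #(X ∪ Y) ≤ 3
  have := card_union_le X Y
  omega

theorem BiIntervalFree.false_of_tail_one_letter {f h ℓ g : α} {P R T : List α}
    (hs : BiIntervalFree (f :: P ++ h :: R ++ ℓ :: T)) (hC : C.OrdConnected)
    (hCc : Cᶜ.OrdConnected) (h7 : 7 ≤ #(f :: P ++ h :: R ++ ℓ :: T).toFinset) (hf : f ∈ C)
    (hh : h ∉ C) (hℓ : ℓ ∈ C) (hT : ∀ t ∈ T, t = g) (hgT : g ∈ T) (hg : g ∉ C) : False := by
  have hout : #{a ∈ (f :: P ++ h :: R ++ ℓ :: T).toFinset | a ∉ C} ≤ 3 := by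
    have hs' : BiIntervalFree ([f] ++ (P ++ h :: R) ++ ℓ :: T) := by simpa using hs
    have := hs'.card_le_two_of_between hC (List.mem_singleton_self f) hf
      (List.mem_cons_self (a := ℓ) (l := T)) hℓ
      (F := {a ∈ (f :: P ++ h :: R ++ ℓ :: T).toFinset | a ∉ C}.erase g) fun a ha => by
        simp only [mem_erase, mem_filter, List.mem_toFinset] at ha
        obtain ⟨hag, ha, haC⟩ := ha
        refine ⟨?_, haC⟩
        simp only [List.cons_append, List.mem_cons, List.mem_append] at ha ⊢
        rcases ha with rfl | ha | rfl | ha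
        exacts [absurd hf haC, ha, absurd hℓ haC, absurd (hT a ha) hag]
    have := pred_card_le_card_erase
      (s := {a ∈ (f :: P ++ h :: R ++ ℓ :: T).toFinset | a ∉ C}) (a := g)
    omega
  have hin : #{a ∈ (f :: P ++ h :: R ++ ℓ :: T).toFinset | a ∈ C} ≤ 3 := by
    have hs' : BiIntervalFree ((f :: P) ++ h :: (R ++ [ℓ]) ++ T) := by simpa using hs
    refine (card_le_card fun a ha => ?_).trans
      (hs'.card_filter_mem_le_three hCc hh (by simp) hℓ hgT hg)
    simp only [mem_filter, List.mem_toFinset] at ha ⊢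
    obtain ⟨ha, haC⟩ := ha
    have haT : a ∉ T := fun haT => hg (hT a haT ▸ haC)
    have hah : a ≠ h := by rintro rfl; exact hh haC
    refine ⟨?_, haC⟩
    simp only [List.cons_append, List.mem_cons, List.mem_append] at ha ⊢
    tauto
  have := card_filter_add_card_filter_not (s := (f :: P ++ h :: R ++ ℓ :: T).toFinset) (· ∈ C)
  omega

theorem BiIntervalFree.false_of_first_mem_last_notMem {f h g : α} {P R : List α}
    (hs : BiIntervalFree (f :: P ++ h :: R ++ [g])) (hC : C.OrdConnected)
    (hCc : Cᶜ.OrdConnected) (h7 : 7 ≤ #(f :: P ++ h :: R ++ [g]).toFinset) (hf : f ∈ C)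
    (hh : h ∉ C) (hR : ∃ z ∈ R, z ∈ C) (hg : g ∉ C) : False := by
  obtain ⟨R, ℓ, T, rfl, hℓ, hT⟩ := List.exists_last_eq_append_cons hR
  have hs' : BiIntervalFree (f :: P ++ h :: R ++ ℓ :: (T ++ [g])) := by simpa using hs
  have h7' : 7 ≤ #(f :: P ++ h :: R ++ ℓ :: (T ++ [g])).toFinset := by simpa using h7
  by_cases hpair : ∃ g₁ g₂, [g₁, g₂] <+ T ++ [g] ∧ g₁ ≠ g₂
  · obtain ⟨g₁, g₂, hg₁₂, hne⟩ := hpair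
    refine hs'.false_of_tail_two_letters hC h7' hf hh hℓ (fun t ht => ?_) hg₁₂ hne
    rcases List.mem_append.1 ht with ht | ht
    exacts [hT t ht, List.mem_singleton.1 ht ▸ hg]
  · refine hs'.false_of_tail_one_letter hC hCc h7' hf hh hℓ (fun t ht => ?_) (by simp) hg
    by_contra htg
    rcases List.pair_sublist_or_pair_sublist ht (by simp : g ∈ T ++ [g]) htg with h | h
    exacts [hpair ⟨t, g, h, htg⟩, hpair ⟨g, t, h, Ne.symm htg⟩]

theorem BiIntervalFree.false_of_sublist_mem_notMem_mem {s : List α} (hs : BiIntervalFree s)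
    (hC : C.OrdConnected) (hCc : Cᶜ.OrdConnected) (h7 : 7 ≤ #s.toFinset) {x y z : α}
    (hw : [x, y, z] <+ s) (hx : x ∈ C) (hy : y ∉ C) (hz : z ∈ C) : False := by
  obtain ⟨P, R, rfl, hxP, hzR⟩ := List.exists_eq_append_cons_of_triple_sublist hw
  obtain ⟨f, P, rfl⟩ := List.exists_cons_of_ne_nil (List.ne_nil_of_mem hxP)
  obtain ⟨R, g, rfl⟩ := (List.eq_nil_or_concat' R).resolve_left (List.ne_nil_of_mem hzR)
  have hs' : BiIntervalFree (f :: P ++ y :: R ++ [g]) := by simpa using hs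
  have h7' : 7 ≤ #(f :: P ++ y :: R ++ [g]).toFinset := by simpa using h7
  have hxP' (hf : f ∉ C) : x ∈ P :=
    (List.mem_cons.1 hxP).resolve_left (by rintro rfl; exact hf hx)
  have hzR' (hg : g ∉ C) : z ∈ R :=
    (List.mem_append.1 hzR).resolve_right fun h => hg (List.mem_singleton.1 h ▸ hz)
  by_cases hf : f ∈ C <;> by_cases hg : g ∈ C
  · exact hs'.false_of_ends_mem hC h7' hf hy hg
  · exact hs'.false_of_first_mem_last_notMem hC hCc h7' hf hy ⟨z, hzR' hg, hz⟩ hg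
  · have hrev : g :: R.reverse ++ y :: P.reverse ++ [f] = (f :: P ++ y :: R ++ [g]).reverse := by
      simp
    have hs'' : BiIntervalFree (g :: R.reverse ++ y :: P.reverse ++ [f]) := hrev ▸ hs'.reverse
    refine hs''.false_of_first_mem_last_notMem hC hCc ?_ hg hy
      ⟨x, List.mem_reverse.2 (hxP' hf), hx⟩ hf
    rwa [hrev, List.toFinset_reverse]
  · refine hs'.false_of_sublist hCc.isBiInterval hC.isBiInterval disjoint_compl_left
      (x₁ := f) (y₁ := x) (x₂ := y) (y₂ := z) (x₃ := g) ?_ hf hx hy hz hg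
    have hzg : [z, g] <+ R ++ [g] := (List.singleton_sublist.2 (hzR' hg)).append (.refl [g])
    simpa using ((List.singleton_sublist.2 (hxP' hf)).append (hzg.cons_cons y)).cons_cons f

theorem BiIntervalFree.pairwise_le_or_pairwise_ge {s : List α} (hs : BiIntervalFree s)
    (h7 : 7 ≤ #s.toFinset) : s.Pairwise (· ≤ ·) ∨ s.Pairwise (· ≥ ·) := by
  have hcut (b : α) {x y z : α} (hw : [x, y, z] <+ s) :
      ¬ (x ≤ b ∧ ¬ y ≤ b ∧ z ≤ b ∨ ¬ x ≤ b ∧ y ≤ b ∧ ¬ z ≤ b) := by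
    rintro (⟨hx, hy, hz⟩ | ⟨hx, hy, hz⟩)
    · exact hs.false_of_sublist_mem_notMem_mem (C := Set.Iic b) Set.ordConnected_Iic
        (by simpa using Set.ordConnected_Ioi) h7 hw hx hy hz
    · exact hs.false_of_sublist_mem_notMem_mem (C := (Set.Iic b)ᶜ)
        (by simpa using Set.ordConnected_Ioi) (by simpa using Set.ordConnected_Iic) h7 hw hx
        (not_not.2 hy) hz
  have hne : s.toFinset.Nonempty := card_pos.1 (by omega)
  set m := s.toFinset.min' hne
  set M := s.toFinset.max' hne
  have hm : m ∈ s := List.mem_toFinset.1 (min'_mem _ hne)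
  have hM : M ∈ s := List.mem_toFinset.1 (max'_mem _ hne)
  have hm_le {a} (ha : a ∈ s) : m ≤ a := min'_le _ _ (List.mem_toFinset.2 ha)
  have hle_M {a} (ha : a ∈ s) : a ≤ M := le_max' _ _ (List.mem_toFinset.2 ha)
  rcases List.pair_sublist_or_pair_sublist hm hM (min'_lt_max'_of_card _ (by omega)).ne
    with hmM | hMm
  · refine .inl (List.pairwise_iff_forall_sublist.2 fun {a b} hab => not_lt.1 fun hba => ?_)
    obtain ⟨x, y, z, hw, hxyz⟩ := List.exists_alternating_triple (p := (· ≤ b)) hmM hab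
      (hm_le (hab.subset (by simp))) (not_le.2 (hba.trans_le (hle_M (hab.subset (by simp)))))
      (not_le.2 hba) le_rfl
    exact hcut b hw hxyz
  · refine .inr (List.pairwise_iff_forall_sublist.2 fun {c d} hcd => not_lt.1 fun hcd' => ?_)
    obtain ⟨x, y, z, hw, hxyz⟩ := List.exists_alternating_triple (p := (· ≤ c)) hcd hMm le_rfl
      (not_le.2 hcd') (not_le.2 (hcd'.trans_le (hle_M (hcd.subset (by simp)))))
      (hm_le (hcd.subset (by simp)))
    exact hcut c hw hxyz

theorem biIntervalFree_iff {s : List α} (h7 : 7 ≤ #s.toFinset) :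
    BiIntervalFree s ↔ s.Pairwise (· ≤ ·) ∨ s.Pairwise (· ≥ ·) := by
  refine ⟨fun hs => hs.pairwise_le_or_pairwise_ge h7, ?_⟩
  rintro (hs | hs)
  · exact biIntervalFree_of_pairwise_le hs
  · simpa using FreeOrdering.reverse (biIntervalFree_of_pairwise_le (List.pairwise_reverse.2 hs))

end Cut

theorem IsNatInterval.ordConnected {k : ℕ} {α : Set ℕ} (h : IsNatInterval k α) :
    α.OrdConnected := by
  obtain ⟨-, a, b, rfl⟩ := h
  exact Set.ordConnected_Icc

theorem Set.OrdConnected.isNatInterval_inter_Icc {I : Set ℕ} (hI : I.OrdConnected) (k : ℕ) :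
    IsNatInterval k (I ∩ Set.Icc 1 k) := by
  refine ⟨Set.inter_subset_right, ?_⟩
  rcases (I ∩ Set.Icc 1 k).eq_empty_or_nonempty with h | h
  · exact ⟨1, 0, by simp [h]⟩
  · exact ⟨_, _, (h.ordConnected_iff_of_bdd (OrderBot.bddBelow _)
      (bddAbove_Icc.mono Set.inter_subset_right)).1 (hI.inter Set.ordConnected_Icc)⟩

section Blocks

variable {V : Type*}

def IsBlockIndex (k : ℕ) (A : ℕ → Set V) (b : V → ℕ) : Prop :=
  (∀ v, b v ∈ Set.Icc 1 k) ∧ ∀ i ∈ Set.Icc 1 k, ∀ v, v ∈ A i ↔ b v = i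

variable {k : ℕ} {A : ℕ → Set V} {b : V → ℕ}

theorem exists_isBlockIndex
    (hdisj : ∀ i ∈ Set.Icc 1 k, ∀ j ∈ Set.Icc 1 k, i ≠ j → Disjoint (A i) (A j))
    (hcover : ⋃ i ∈ Set.Icc 1 k, A i = Set.univ) : ∃ b, IsBlockIndex k A b := by
  have hex (v : V) : ∃ i ∈ Set.Icc 1 k, v ∈ A i := by
    simpa using hcover.ge (Set.mem_univ v)
  choose b hb hvb using hex
  refine ⟨b, hb, fun i hi v => ⟨fun hv => ?_, fun h => h ▸ hvb v⟩⟩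
  by_contra hne
  exact Set.disjoint_left.1 (hdisj _ (hb v) i hi hne) (hvb v) hv

theorem IsBlockIndex.biUnion_eq_preimage (hb : IsBlockIndex k A b) {α : Set ℕ}
    (hα : α ⊆ Set.Icc 1 k) : ⋃ i ∈ α, A i = b ⁻¹' α := by
  ext v
  simp only [Set.mem_iUnion, Set.mem_preimage, exists_prop]
  constructor
  · rintro ⟨i, hi, hv⟩
    rwa [(hb.2 i (hα hi) v).1 hv]
  · exact fun hv => ⟨b v, hv, (hb.2 _ (hb.1 v) v).2 rfl⟩

theorem IsBlockIndex.reverse (hb : IsBlockIndex k A b) :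
    IsBlockIndex k (fun i => A (k + 1 - i)) (fun v => k + 1 - b v) := by
  refine ⟨fun v => ?_, fun i hi v => ?_⟩
  · have := hb.1 v
    simp only [Set.mem_Icc] at this ⊢
    omega
  · dsimp only
    have := hb.1 v
    simp only [Set.mem_Icc] at this hi
    rw [hb.2 (k + 1 - i) (by simp only [Set.mem_Icc]; omega) v]
    omega

theorem IsBlockIndex.hasStructure_iff (hb : IsBlockIndex k A b) {π : List V}
    (hπ : ∀ v, v ∈ π) : HasStructure k A π ↔ (π.map b).Pairwise (· ≤ ·) := by
  rw [List.pairwise_map, List.pairwise_iff_forall_sublist]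
  constructor
  · intro hst v w hvw
    rcases eq_or_ne (b v) (b w) with h | h
    · exact h.le
    · exact ((hst _ (hb.1 v) _ (hb.1 w) h v ((hb.2 _ (hb.1 v) v).2 rfl) w
        ((hb.2 _ (hb.1 w) w).2 rfl)).1 hvw).le
  · intro hsorted i hi j hj hij v hv w hw
    obtain rfl := (hb.2 i hi v).1 hv
    obtain rfl := (hb.2 j hj w).1 hw
    refine ⟨fun h => (hsorted h).lt_of_ne hij, fun hlt => ?_⟩
    rcases List.pair_sublist_or_pair_sublist (hπ v) (hπ w) (by rintro rfl; exact hij rfl)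
      with h | h
    exacts [h, absurd (hsorted h) (not_le.2 hlt)]

theorem IsBlockIndex.freeOrdering_iff (hb : IsBlockIndex k A b) {π : List V} :
    FreeOrdering 5 {S | ∃ α β : Set ℕ, IsNatInterval k α ∧ IsNatInterval k β ∧
      S = (⋃ i ∈ α, A i) ∪ (⋃ j ∈ β, A j)} π ↔ BiIntervalFree (π.map b) := by
  have hedge {α β : Set ℕ} (hα : IsNatInterval k α) (hβ : IsNatInterval k β) :
      (⋃ i ∈ α, A i) ∪ (⋃ j ∈ β, A j) = b ⁻¹' (α ∪ β) := by
    rw [hb.biUnion_eq_preimage hα.1, hb.biUnion_eq_preimage hβ.1, Set.preimage_union]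
  have hrestrict (I J : Set ℕ) : b ⁻¹' (I ∩ Set.Icc 1 k ∪ J ∩ Set.Icc 1 k) = b ⁻¹' (I ∪ J) := by
    rw [← Set.union_inter_distrib_right, Set.preimage_inter,
      Set.preimage_eq_univ_iff.2 (Set.range_subset_iff.2 hb.1), Set.inter_univ]
  constructor
  · rintro hfree S ⟨I, J, hI, hJ, rfl⟩ T ⟨I', J', hI', hJ', rfl⟩ hpat
    have hα := hI.isNatInterval_inter_Icc k
    have hβ := hJ.isNatInterval_inter_Icc k
    have hγ := hI'.isNatInterval_inter_Icc k
    have hδ := hJ'.isNatInterval_inter_Icc k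
    refine hfree _ ⟨_, _, hα, hβ, rfl⟩ _ ⟨_, _, hγ, hδ, rfl⟩ ?_
    rwa [hedge hα hβ, hedge hγ hδ, hrestrict, hrestrict, ← formPattern_map_iff]
  · rintro hfree X ⟨α, β, hα, hβ, rfl⟩ Y ⟨γ, δ, hγ, hδ, rfl⟩ hpat
    rw [hedge hα hβ, hedge hγ hδ, ← formPattern_map_iff] at hpat
    exact hfree _ (isBiInterval_union hα.ordConnected hβ.ordConnected) _
      (isBiInterval_union hγ.ordConnected hδ.ordConnected) hpat

end Blocks

theorem two_interval_blocks_ABABA_free_iff_general {V : Type*} (k : ℕ)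
    (hk : 7 ≤ k) (A : ℕ → Set V)
    (hdisj : ∀ i ∈ Set.Icc 1 k, ∀ j ∈ Set.Icc 1 k, i ≠ j → Disjoint (A i) (A j))
    (hne : ∀ i ∈ Set.Icc 1 k, (A i).Nonempty)
    (hcover : ⋃ i ∈ Set.Icc 1 k, A i = Set.univ)
    (π : List V) (hπ : IsOrderingOf Set.univ π) :
    FreeOrdering 5
        {S | ∃ α β : Set ℕ, IsNatInterval k α ∧ IsNatInterval k β ∧
          S = (⋃ i ∈ α, A i) ∪ (⋃ j ∈ β, A j)} π ↔
      HasStructure k A π ∨ HasStructure k (fun i => A (k + 1 - i)) π := by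
  obtain ⟨b, hb⟩ := exists_isBlockIndex hdisj hcover
  have hπ' (v : V) : v ∈ π := (hπ.2 v).2 trivial
  have h7 : 7 ≤ #(π.map b).toFinset := by
    have hsub : Finset.Icc 1 k ⊆ (π.map b).toFinset := fun i hi => by
      have hi' : i ∈ Set.Icc 1 k := by simpa using hi
      obtain ⟨v, hv⟩ := hne i hi'
      exact List.mem_toFinset.2 (List.mem_map.2 ⟨v, hπ' v, (hb.2 i hi' v).1 hv⟩)
    have := card_le_card hsub
    simp only [Nat.card_Icc, add_tsub_cancel_right] at this
    omega
  rw [hb.freeOrdering_iff, biIntervalFree_iff h7, hb.hasStructure_iff hπ',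
    hb.reverse.hasStructure_iff hπ', List.pairwise_map, List.pairwise_map, List.pairwise_map]
  refine or_congr_right (List.Pairwise.iff fun v w => ?_)
  have := hb.1 v
  have := hb.1 w
  simp only [Set.mem_Icc] at *
  omega

/-- **Corollary (two-interval blocks).** Let `k ≥ 7`, let `V` be partitioned
into disjoint nonempty sets `A 1, …, A k`, and let `E` consist of all sets
`(⋃_{i ∈ α} A i) ∪ (⋃_{j ∈ β} A j)` over intervals `α, β` of `{1, …, k}`.
Then an ordering `π` of `V` is an `ABABA`-free ordering of the hypergraph
`(V, E)` if and only if `π` has structure `A 1, A 2, …, A k` or structure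
`A k, A (k-1), …, A 1`. -/
theorem two_interval_blocks_ABABA_free_iff {V : Type*} [Fintype V] (k : ℕ)
    (hk : 7 ≤ k) (A : ℕ → Set V)
    (hdisj : ∀ i ∈ Set.Icc 1 k, ∀ j ∈ Set.Icc 1 k, i ≠ j → Disjoint (A i) (A j))
    (hne : ∀ i ∈ Set.Icc 1 k, (A i).Nonempty)
    (hcover : ⋃ i ∈ Set.Icc 1 k, A i = Set.univ)
    (π : List V) (hπ : IsOrderingOf Set.univ π) :
    FreeOrdering 5
        {S | ∃ α β : Set ℕ, IsNatInterval k α ∧ IsNatInterval k β ∧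
          S = (⋃ i ∈ α, A i) ∪ (⋃ j ∈ β, A j)} π ↔
      HasStructure k A π ∨ HasStructure k (fun i => A (k + 1 - i)) π :=
  two_interval_blocks_ABABA_free_iff_general k hk A hdisj hne hcover π hπ
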